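/- For any Borel probability measure F on R^d there exists a constant c(F) > 0 depending only on F such that for every positive integer n one can construct, on one probability space, random vectors ξ_n and η_n with laws L(ξ_n) = F^{*(n+1)} and L(η_n) = F^{*n} such that P(‖ξ_n − η_n‖ > c(F)) ≤ c(F)/√n. -/

import Mathlib

/-!
Write `F = μ + ν` with `μ`, `ν` of mass `1/2` and `μ` carried by the ball of radius `R`. Expanding
`F^{*m} = ∑ₖ C(m, k) μ^{*k} * ν^{*(m-k)}` exhibits `S_m` as a sum of `K_m ∼ Bin(m, 1/2)` steps with
law `2μ` and `m - K_m` steps with law `2ν`. On the event `K_{n+1} = K_n + 1`, `S_{n+1}` is realised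
as `S_n` plus one more `2μ`-step, which moves it by at most `R`. A maximal coupling of `K_{n+1}` with
`K_n + 1` fails with probability `C(n, ⌊n/2⌋) / 2^{n+1} ≤ 1 / (2√n)`; the leftover masses of the
two marginals are then coupled independently.
-/

open MeasureTheory ProbabilityTheory Metric

/-- n-fold convolution power of a measure on ℝ^d (0-th power is the Dirac measure at 0). -/
noncomputable def convPow {d : ℕ} (F : Measure (EuclideanSpace ℝ (Fin d))) :
    ℕ → Measure (EuclideanSpace ℝ (Fin d))
  | 0 => Measure.dirac 0
  | (n + 1) => (convPow F n).conv F

open scoped ENNReal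
open Set Finset Filter

namespace Nat

theorem centralBinom_sq_mul_le (m : ℕ) : centralBinom m ^ 2 * (2 * m + 1) ≤ 16 ^ m := by
  induction m with
  | zero => simp
  | succ m ih =>
    refine Nat.le_of_mul_le_mul_left (c := (m + 1) ^ 2) ?_ (by positivity)
    calc (m + 1) ^ 2 * (centralBinom (m + 1) ^ 2 * (2 * (m + 1) + 1))
        = ((m + 1) * centralBinom (m + 1)) ^ 2 * (2 * m + 3) := by ring
      _ = centralBinom m ^ 2 * (2 * m + 1) * (4 * ((2 * m + 1) * (2 * m + 3))) := by
        rw [succ_mul_centralBinom_succ]; ring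
      _ ≤ 16 ^ m * (4 * (2 * (m + 1)) ^ 2) := by gcongr; nlinarith
      _ = (m + 1) ^ 2 * 16 ^ (m + 1) := by ring

theorem choose_half_sq_mul_le (n : ℕ) : n.choose (n / 2) ^ 2 * n ≤ 4 ^ n := by
  obtain ⟨m, rfl | rfl⟩ := n.even_or_odd'
  · rw [show 2 * m / 2 = m by omega, ← centralBinom_eq_two_mul_choose, pow_mul]
    calc centralBinom m ^ 2 * (2 * m) ≤ centralBinom m ^ 2 * (2 * m + 1) := by gcongr; omega
      _ ≤ 16 ^ m := centralBinom_sq_mul_le m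
  · have hchoose : (2 * m + 1).choose m ≤ 2 * centralBinom m := by
      have := choose_le_middle (m + 1) (2 * m)
      rw [show 2 * m / 2 = m by omega] at this
      rw [← choose_symm_half, choose_succ_succ', centralBinom_eq_two_mul_choose]
      omega
    rw [show (2 * m + 1) / 2 = m by omega]
    calc (2 * m + 1).choose m ^ 2 * (2 * m + 1) ≤ (2 * centralBinom m) ^ 2 * (2 * m + 1) := by
          gcongr
      _ = 4 * (centralBinom m ^ 2 * (2 * m + 1)) := by ring
      _ ≤ 4 * 16 ^ m := by gcongr; exact centralBinom_sq_mul_le m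
      _ = 4 ^ (2 * m + 1) := by rw [pow_succ, pow_mul]; ring

theorem choose_succ_le_of_half_le {n k : ℕ} (h : n / 2 ≤ k) : n.choose (k + 1) ≤ n.choose k := by
  refine Nat.le_of_mul_le_mul_right ?_ k.succ_pos
  rw [choose_succ_right_eq]
  exact Nat.mul_le_mul_left _ (by omega)

theorem sum_range_choose_tsub_choose_succ (n : ℕ) :
    ∑ k ∈ range (n + 1), (n.choose k - n.choose (k + 1)) = n.choose (n / 2) := by
  suffices h : ∀ N, n / 2 ≤ N →
      ∑ k ∈ range N, (n.choose k - n.choose (k + 1)) = n.choose (n / 2) - n.choose N by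
    rw [h (n + 1) (by omega), choose_succ_self, Nat.sub_zero]
  intro N hN
  induction N, hN using Nat.le_induction with
  | base =>
    rw [Nat.sub_self]
    exact sum_eq_zero fun k hk ↦
      Nat.sub_eq_zero_of_le (choose_le_succ_of_lt_half_left (mem_range.1 hk))
  | succ N hN ih =>
    rw [sum_range_succ, ih]
    have := choose_succ_le_of_half_le hN
    have := choose_le_middle N n
    omega

theorem sum_range_min_choose_add_choose_half (n : ℕ) :
    ∑ k ∈ range (n + 1), min (2 * n.choose k) ((n + 1).choose (k + 1)) + n.choose (n / 2)
      = 2 ^ (n + 1) := by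
  rw [← sum_range_choose_tsub_choose_succ, ← sum_add_distrib, pow_succ, mul_comm,
    ← sum_range_choose, mul_sum]
  refine sum_congr rfl fun k _ ↦ ?_
  rw [choose_succ_succ']
  omega

theorem choose_half_div_two_pow_le {n : ℕ} (hn : 0 < n) :
    (n.choose (n / 2) : ℝ) / 2 ^ (n + 1) ≤ (2 * √n)⁻¹ := by
  have hsq : ((n.choose (n / 2) : ℝ) * √n) ^ 2 ≤ (2 ^ n) ^ 2 := by
    rw [mul_pow, Real.sq_sqrt n.cast_nonneg, ← pow_mul, mul_comm n, pow_mul]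
    exact_mod_cast choose_half_sq_mul_le n
  have hroot : (n.choose (n / 2) : ℝ) * √n ≤ 2 ^ n :=
    (pow_le_pow_iff_left₀ (by positivity) (by positivity) two_ne_zero).1 hsq
  have : 0 < √(n : ℝ) := Real.sqrt_pos.2 (by exact_mod_cast hn)
  rw [div_le_iff₀ (by positivity), inv_mul_eq_div, le_div_iff₀ (by positivity)]
  calc (n.choose (n / 2) : ℝ) * (2 * √n) = 2 * ((n.choose (n / 2) : ℝ) * √n) := by ring
    _ ≤ 2 * 2 ^ n := by gcongr
    _ = 2 ^ (n + 1) := by ring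

end Nat

namespace MeasureTheory

namespace Measure

instance sFinite_finset_sum {α ι : Type*} [MeasurableSpace α] (s : Finset ι) (μ : ι → Measure α)
    [∀ i, SFinite (μ i)] : SFinite (∑ i ∈ s, μ i) := by
  rw [← sum_coe_finset]; infer_instance

theorem map_apply_univ {α β : Type*} [MeasurableSpace α] [MeasurableSpace β] {f : α → β}
    (hf : Measurable f) (μ : Measure α) : μ.map f univ = μ univ := by
  rw [map_apply hf MeasurableSet.univ, preimage_univ]

section Conv

variable {M : Type*} [AddCommMonoid M] [MeasurableSpace M] [MeasurableAdd₂ M]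

theorem conv_apply_univ (μ ν : Measure M) [SFinite ν] : μ.conv ν univ = μ univ * ν univ := by
  rw [Measure.conv, map_apply (by fun_prop) MeasurableSet.univ, preimage_univ, ← univ_prod_univ,
    prod_prod]

theorem finset_sum_conv {ι : Type*} (s : Finset ι) (μ : ι → Measure M) [∀ i, SFinite (μ i)]
    (ν : Measure M) [SFinite ν] : (∑ i ∈ s, μ i).conv ν = ∑ i ∈ s, (μ i).conv ν := by
  classical
  induction s using Finset.induction_on with
  | empty => simp
  | insert i s hi ih => rw [sum_insert hi, sum_insert hi, add_conv, ih]

noncomputable def shiftCoupling (m μ : Measure M) : Measure (M × M) :=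
  (m.prod μ).map fun q ↦ (q.1 + q.2, q.1)

theorem map_fst_shiftCoupling (m μ : Measure M) : (m.shiftCoupling μ).map Prod.fst = m.conv μ := by
  rw [shiftCoupling, map_map measurable_fst (by fun_prop)]
  rfl

theorem map_snd_shiftCoupling (m μ : Measure M) [SFinite μ] :
    (m.shiftCoupling μ).map Prod.snd = μ univ • m := by
  rw [shiftCoupling, map_map measurable_snd (by fun_prop)]
  exact map_fst_prod

theorem shiftCoupling_apply_univ (m μ : Measure M) [SFinite μ] :
    m.shiftCoupling μ univ = m univ * μ univ := by
  rw [← map_apply_univ measurable_fst, map_fst_shiftCoupling, conv_apply_univ]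

end Conv

theorem shiftCoupling_lt_norm_sub_eq_zero {M : Type*} [NormedAddCommGroup M] [MeasurableSpace M]
    [BorelSpace M] [SecondCountableTopology M] (m μ : Measure M) [SFinite μ] {c : ℝ}
    (hμ : μ (closedBall 0 c)ᶜ = 0) : m.shiftCoupling μ {q | c < ‖q.1 - q.2‖} = 0 := by
  have hpre : (fun q : M × M ↦ (q.1 + q.2, q.1)) ⁻¹' {q | c < ‖q.1 - q.2‖}
      = univ ×ˢ (closedBall 0 c)ᶜ := by
    ext q; simp
  rw [shiftCoupling, map_apply (by fun_prop) (measurableSet_lt measurable_const (by fun_prop)),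
    hpre, prod_prod, hμ, mul_zero]

variable {α β : Type*} [MeasurableSpace α] [MeasurableSpace β]

theorem inv_measure_univ_smul_smul (ρ : Measure α) [IsFiniteMeasure ρ] :
    (ρ univ)⁻¹ • ρ univ • ρ = ρ := by
  rcases eq_or_ne (ρ univ) 0 with h | h
  · simp [measure_univ_eq_zero.1 h]
  · rw [smul_smul, ENNReal.inv_mul_cancel h (measure_ne_top ρ univ), one_smul]

theorem exists_map_fst_eq_map_snd_eq (ρ₁ : Measure α) (ρ₂ : Measure β) [IsFiniteMeasure ρ₁]
    [IsFiniteMeasure ρ₂] (h : ρ₁ univ = ρ₂ univ) :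
    ∃ τ : Measure (α × β), τ.map Prod.fst = ρ₁ ∧ τ.map Prod.snd = ρ₂ := by
  refine ⟨(ρ₁ univ)⁻¹ • ρ₁.prod ρ₂, ?_, ?_⟩
  · rw [Measure.map_smul, map_fst_prod, ← h, inv_measure_univ_smul_smul]
  · rw [Measure.map_smul, map_snd_prod, h, inv_measure_univ_smul_smul]

theorem exists_coupling_le_add_of_map_le (μ : Measure α) (ν : Measure β) [IsProbabilityMeasure μ]
    [IsProbabilityMeasure ν] (G : Measure (α × β)) (h₁ : G.map Prod.fst ≤ μ)
    (h₂ : G.map Prod.snd ≤ ν) :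
    ∃ γ : Measure (α × β), IsProbabilityMeasure γ ∧ γ.map Prod.fst = μ ∧ γ.map Prod.snd = ν ∧
      ∀ s, γ s ≤ G s + (1 - G univ) := by
  have : IsFiniteMeasure (G.map Prod.fst) := isFiniteMeasure_of_le μ h₁
  have : IsFiniteMeasure (G.map Prod.snd) := isFiniteMeasure_of_le ν h₂
  have : IsFiniteMeasure (μ - G.map Prod.fst) := isFiniteMeasure_of_le μ sub_le
  have : IsFiniteMeasure (ν - G.map Prod.snd) := isFiniteMeasure_of_le ν sub_le
  have hρ₁ : (μ - G.map Prod.fst) univ = 1 - G univ := by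
    rw [sub_apply MeasurableSet.univ h₁, measure_univ, map_apply_univ measurable_fst]
  have hρ₂ : (ν - G.map Prod.snd) univ = 1 - G univ := by
    rw [sub_apply MeasurableSet.univ h₂, measure_univ, map_apply_univ measurable_snd]
  obtain ⟨τ, hτ₁, hτ₂⟩ := exists_map_fst_eq_map_snd_eq _ _ (hρ₁.trans hρ₂.symm)
  have hγ₁ : (G + τ).map Prod.fst = μ := by
    rw [Measure.map_add _ _ measurable_fst, hτ₁, add_comm, sub_add_cancel_of_le h₁]
  refine ⟨G + τ, ⟨?_⟩, hγ₁, ?_, fun s ↦ ?_⟩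
  · rw [← map_apply_univ measurable_fst, hγ₁, measure_univ]
  · rw [Measure.map_add _ _ measurable_snd, hτ₂, add_comm, sub_add_cancel_of_le h₂]
  · calc (G + τ) s ≤ G s + τ univ := by rw [add_apply]; gcongr; exact subset_univ s
      _ = G s + (1 - G univ) := by rw [← hρ₁, ← hτ₁, map_apply_univ measurable_fst]

end Measure

theorem eventually_lt_measure_closedBall {X : Type*} [PseudoMetricSpace X] [MeasurableSpace X]
    (F : Measure X) (x : X) {a : ℝ≥0∞} (ha : a < F univ) :
    ∀ᶠ R : ℕ in atTop, a < F (closedBall x R) := by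
  have h := tendsto_measure_iUnion_atTop (μ := F)
    (fun _ _ hRS ↦ closedBall_subset_closedBall (Nat.cast_le.2 hRS) :
      Monotone fun R : ℕ ↦ closedBall x R)
  rw [iUnion_closedBall_nat] at h
  exact h.eventually (lt_mem_nhds ha)

theorem exists_add_eq_of_half_le {α : Type*} [MeasurableSpace α] (F : Measure α)
    [IsProbabilityMeasure F] {s : Set α} (hs : MeasurableSet s) (hFs : 2⁻¹ ≤ F s) :
    ∃ μ ν : Measure α, μ + ν = F ∧ μ univ = 2⁻¹ ∧ ν univ = 2⁻¹ ∧ μ sᶜ = 0 := by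
  have hFs₀ : F s ≠ 0 := (lt_of_lt_of_le (by norm_num) hFs).ne'
  set μ := (2 * F s)⁻¹ • F.restrict s
  have hμF : μ ≤ F := by
    have : (2 * F s)⁻¹ ≤ 1 := by
      rw [ENNReal.inv_le_one, ← ENNReal.mul_inv_cancel two_ne_zero ENNReal.ofNat_ne_top]
      gcongr
    calc μ = (2 * F s)⁻¹ • F.restrict s := rfl
      _ ≤ (1 : ℝ≥0∞) • F.restrict s := by gcongr
      _ ≤ F := by rw [one_smul]; exact Measure.restrict_le_self
  have hμ : μ univ = 2⁻¹ := by
    rw [Measure.smul_apply, Measure.restrict_apply_univ, smul_eq_mul,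
      ENNReal.mul_inv (by simp) (by simp), mul_assoc,
      ENNReal.inv_mul_cancel hFs₀ (measure_ne_top F s), mul_one]
  have : IsFiniteMeasure μ := isFiniteMeasure_of_le F hμF
  refine ⟨μ, F - μ, (add_comm _ _).trans (Measure.sub_add_cancel_of_le hμF), hμ, ?_, ?_⟩
  · rw [Measure.sub_apply MeasurableSet.univ hμF, measure_univ, hμ, ENNReal.one_sub_inv_two]
  · rw [Measure.smul_apply, Measure.restrict_apply hs.compl, compl_inter_self, measure_empty,
      smul_zero]

end MeasureTheory

open MeasureTheory Measure

section ConvPow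

variable {d : ℕ}

theorem convPow_succ (μ : Measure (EuclideanSpace ℝ (Fin d))) (n : ℕ) :
    convPow μ (n + 1) = (convPow μ n).conv μ := rfl

instance sFinite_convPow (μ : Measure (EuclideanSpace ℝ (Fin d))) [SFinite μ] (n : ℕ) :
    SFinite (convPow μ n) := by
  induction n with
  | zero => unfold convPow; infer_instance
  | succ n ih => rw [convPow_succ]; infer_instance

instance isProbabilityMeasure_convPow (μ : Measure (EuclideanSpace ℝ (Fin d)))
    [IsProbabilityMeasure μ] (n : ℕ) : IsProbabilityMeasure (convPow μ n) := by
  induction n with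
  | zero => unfold convPow; infer_instance
  | succ n ih => rw [convPow_succ]; infer_instance

theorem convPow_apply_univ (μ : Measure (EuclideanSpace ℝ (Fin d))) [SFinite μ] (n : ℕ) :
    convPow μ n univ = μ univ ^ n := by
  induction n with
  | zero => simp [convPow]
  | succ n ih => rw [convPow_succ, conv_apply_univ, ih, pow_succ]

noncomputable def mixedConvPow (μ ν : Measure (EuclideanSpace ℝ (Fin d))) (i j : ℕ) :
    Measure (EuclideanSpace ℝ (Fin d)) :=
  (convPow μ i).conv (convPow ν j)

variable (μ ν : Measure (EuclideanSpace ℝ (Fin d)))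

instance sFinite_mixedConvPow [SFinite μ] [SFinite ν] (i j : ℕ) :
    SFinite (mixedConvPow μ ν i j) := by
  unfold mixedConvPow; infer_instance

theorem mixedConvPow_apply_univ [SFinite μ] [SFinite ν] (i j : ℕ) :
    mixedConvPow μ ν i j univ = μ univ ^ i * ν univ ^ j := by
  rw [mixedConvPow, conv_apply_univ, convPow_apply_univ, convPow_apply_univ]

theorem mixedConvPow_conv_left [SFinite μ] [SFinite ν] (i j : ℕ) :
    (mixedConvPow μ ν i j).conv μ = mixedConvPow μ ν (i + 1) j := by
  rw [mixedConvPow, conv_assoc, conv_comm (convPow ν j), ← conv_assoc]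
  rfl

theorem mixedConvPow_conv_right [SFinite ν] (i j : ℕ) :
    (mixedConvPow μ ν i j).conv ν = mixedConvPow μ ν i (j + 1) := by
  rw [mixedConvPow, conv_assoc]
  rfl

theorem convPow_add [SFinite μ] [SFinite ν] (n : ℕ) :
    convPow (μ + ν) n = ∑ k ∈ range (n + 1), (n.choose k : ℝ≥0∞) • mixedConvPow μ ν k (n - k) := by
  simp only [Nat.cast_smul_eq_nsmul]
  induction n with
  | zero => simp [mixedConvPow, convPow]
  | succ n ih =>
    rw [convPow_succ, ih, conv_add, finset_sum_conv, finset_sum_conv]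
    conv_rhs => rw [sum_choose_succ_nsmul (fun i j ↦ mixedConvPow μ ν i j), add_comm]
    congr 1 <;> refine sum_congr rfl fun k hk ↦ ?_
    · rw [← Nat.cast_smul_eq_nsmul ℝ≥0∞, conv_smul_left, mixedConvPow_conv_left,
        Nat.cast_smul_eq_nsmul]
    · rw [← Nat.cast_smul_eq_nsmul ℝ≥0∞, conv_smul_left, mixedConvPow_conv_right,
        Nat.cast_smul_eq_nsmul, Nat.sub_add_comm (mem_range_succ_iff.1 hk)]

end ConvPow

section BinomialSubcoupling

variable {d : ℕ} (μ ν : Measure (EuclideanSpace ℝ (Fin d))) (n : ℕ)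

/-- The weight of block `k` is the mass that a maximal coupling of `Bin(n + 1, 1/2)` with
`1 + Bin(n, 1/2)` puts on `(k + 1, k + 1)`, multiplied by `2 ^ (n + 1)`. -/
noncomputable def binomialSubcoupling :
    Measure (EuclideanSpace ℝ (Fin d) × EuclideanSpace ℝ (Fin d)) :=
  ∑ k ∈ range (n + 1), ((min (2 * n.choose k) ((n + 1).choose (k + 1)) : ℕ) : ℝ≥0∞) •
    (mixedConvPow μ ν k (n - k)).shiftCoupling μ

theorem map_fst_binomialSubcoupling_le [SFinite μ] [SFinite ν] :
    (binomialSubcoupling μ ν n).map Prod.fst ≤ convPow (μ + ν) (n + 1) := by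
  rw [binomialSubcoupling, Measure.map_finset_sum (by fun_prop), convPow_add]
  conv_rhs => rw [sum_range_succ']
  refine Measure.le_add_right (sum_le_sum fun k _ ↦ ?_)
  rw [Measure.map_smul, map_fst_shiftCoupling, mixedConvPow_conv_left, Nat.add_sub_add_right]
  gcongr
  exact_mod_cast min_le_right _ _

theorem map_snd_binomialSubcoupling_le [SFinite μ] [SFinite ν] (hμ : μ univ ≤ 2⁻¹) :
    (binomialSubcoupling μ ν n).map Prod.snd ≤ convPow (μ + ν) n := by
  rw [binomialSubcoupling, Measure.map_finset_sum (by fun_prop), convPow_add]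
  refine sum_le_sum fun k _ ↦ ?_
  rw [Measure.map_smul, map_snd_shiftCoupling, smul_smul]
  gcongr
  calc ((min (2 * n.choose k) ((n + 1).choose (k + 1)) : ℕ) : ℝ≥0∞) * μ univ
      ≤ (2 * n.choose k : ℕ) * 2⁻¹ := by gcongr; exact min_le_left _ _
    _ = n.choose k := by
      push_cast
      rw [mul_comm 2, mul_assoc, ENNReal.mul_inv_cancel two_ne_zero ENNReal.ofNat_ne_top, mul_one]

theorem binomialSubcoupling_lt_norm_sub_eq_zero [SFinite μ] {c : ℝ}
    (hμ : μ (closedBall 0 c)ᶜ = 0) : binomialSubcoupling μ ν n {q | c < ‖q.1 - q.2‖} = 0 := by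
  simp [binomialSubcoupling, shiftCoupling_lt_norm_sub_eq_zero _ _ hμ]

theorem one_sub_binomialSubcoupling_apply_univ [SFinite μ] [SFinite ν] (hμ : μ univ = 2⁻¹)
    (hν : ν univ = 2⁻¹) :
    1 - binomialSubcoupling μ ν n univ = n.choose (n / 2) * 2⁻¹ ^ (n + 1) := by
  have hmass : binomialSubcoupling μ ν n univ
      = (∑ k ∈ range (n + 1), min (2 * n.choose k) ((n + 1).choose (k + 1)) : ℕ)
        * 2⁻¹ ^ (n + 1) := by
    rw [binomialSubcoupling, finsetSum_apply, Nat.cast_sum, sum_mul]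
    refine sum_congr rfl fun k hk ↦ ?_
    rw [Measure.smul_apply, smul_eq_mul, shiftCoupling_apply_univ, mixedConvPow_apply_univ, hμ, hν,
      ← pow_add, ← pow_succ, Nat.add_sub_cancel' (mem_range_succ_iff.1 hk)]
  have htotal : (2⁻¹ : ℝ≥0∞) ^ (n + 1) * 2 ^ (n + 1) = 1 := by
    rw [← mul_pow, ENNReal.inv_mul_cancel two_ne_zero ENNReal.ofNat_ne_top, one_pow]
  refine ENNReal.sub_eq_of_eq_add_rev
    (by rw [hmass]; exact ENNReal.mul_ne_top (by simp) (by simp)) ?_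
  rw [hmass, ← add_mul, ← Nat.cast_add, Nat.sum_range_min_choose_add_choose_half]
  push_cast
  rw [mul_comm, htotal]

end BinomialSubcoupling

/-- For any F on ℝ^d there is c(F) > 0 such that for every n ≥ 1 one can construct, on one
probability space, random vectors ξ and η with laws F^{n+1} and F^n respectively, with
P(‖ξ - η‖ > c) ≤ c/√n. -/
theorem statement19 {d : ℕ} (F : Measure (EuclideanSpace ℝ (Fin d)))
    [IsProbabilityMeasure F] :
    ∃ c : ℝ, 0 < c ∧ ∀ n : ℕ, 0 < n →
      ∃ (Ω : Type) (_ : MeasurableSpace Ω) (P : Measure Ω) (_ : IsProbabilityMeasure P)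
        (ξ η : Ω → EuclideanSpace ℝ (Fin d)),
        Measurable ξ ∧ Measurable η ∧
        P.map ξ = convPow F (n + 1) ∧ P.map η = convPow F n ∧
        (P {ω | c < ‖ξ ω - η ω‖}).toReal ≤ c / Real.sqrt n := by
  obtain ⟨R, hR, hRF⟩ := ((eventually_ge_atTop 1).and
    (eventually_lt_measure_closedBall F 0 (a := 2⁻¹) (by simp))).exists
  obtain ⟨μ, ν, rfl, hμ, hν, hμR⟩ := exists_add_eq_of_half_le F measurableSet_closedBall hRF.le
  have : IsFiniteMeasure μ := ⟨by simp [hμ]⟩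
  have : IsFiniteMeasure ν := ⟨by simp [hν]⟩
  refine ⟨R, by exact_mod_cast hR, fun n hn ↦ ?_⟩
  obtain ⟨γ, hγ, hγ₁, hγ₂, hγG⟩ := exists_coupling_le_add_of_map_le _ _ _
    (map_fst_binomialSubcoupling_le μ ν n) (map_snd_binomialSubcoupling_le μ ν n hμ.le)
  refine ⟨_, _, γ, hγ, Prod.fst, Prod.snd, measurable_fst, measurable_snd, hγ₁, hγ₂, ?_⟩
  have hbad : γ {q | (R : ℝ) < ‖q.1 - q.2‖} ≤ n.choose (n / 2) * 2⁻¹ ^ (n + 1) := by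
    simpa [binomialSubcoupling_lt_norm_sub_eq_zero μ ν n hμR,
      one_sub_binomialSubcoupling_apply_univ μ ν n hμ hν] using hγG {q | (R : ℝ) < ‖q.1 - q.2‖}
  calc (γ {q | (R : ℝ) < ‖q.1 - q.2‖}).toReal ≤ (n.choose (n / 2) : ℝ) / 2 ^ (n + 1) := by
        refine (ENNReal.toReal_mono (ENNReal.mul_ne_top (by simp) (by simp)) hbad).trans_eq ?_
        simp [div_eq_mul_inv]
    _ ≤ (2 * √n)⁻¹ := Nat.choose_half_div_two_pow_le hn
    _ ≤ R / √n := by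
        rw [mul_inv, div_eq_mul_inv]
        gcongr
        linarith [(Nat.one_le_cast (α := ℝ)).2 hR]
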